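/- The model companion of a theory depends only on its universal part: if T* is a model companion of a first-order theory T, and S is a first-order theory in the same language with the same universal consequences as T (S_∀ = T_∀), then T* is a model companion of S. -/

import Mathlib

open FirstOrder FirstOrder.Language

universe u v

variable {L : FirstOrder.Language.{u, v}}

/-- A formula is *universal* if it has the form `∀ ȳ, χ` with `χ` quantifier-free. -/
def IsUniversalFormula {α : Type*} (φ : L.Formula α) : Prop :=
  ∃ (n : ℕ) (χ : L.BoundedFormula α n), χ.IsQF ∧ φ = χ.alls

/-- A formula is *existential* if it has the form `∃ ȳ, χ` with `χ` quantifier-free. -/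
def IsExistentialFormula {α : Type*} (φ : L.Formula α) : Prop :=
  ∃ (n : ℕ) (χ : L.BoundedFormula α n), χ.IsQF ∧ φ = χ.exs

/-- A theory is *model complete* if every embedding between models of it is elementary. -/
def IsModelComplete (T : L.Theory) : Prop :=
  ∀ (M N : Type (max u v)) [L.Structure M] [L.Structure N] [Nonempty M] [Nonempty N],
    M ⊨ T → N ⊨ T → ∀ (f : M ↪[L] N) (n : ℕ) (φ : L.Formula (Fin n)) (x : Fin n → M),
      φ.Realize (f ∘ x) ↔ φ.Realize x

/-- `M` is *existentially closed in `N` via* the embedding `f` if every existential formula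
with parameters from `M` that holds in `N` (of the images) already holds in `M`. -/
def IsECVia {M N : Type (max u v)} [L.Structure M] [L.Structure N] (f : M ↪[L] N) : Prop :=
  ∀ (k : ℕ) (φ : L.Formula (Fin k)), IsExistentialFormula φ →
    ∀ x : Fin k → M, φ.Realize (f ∘ x) → φ.Realize x

/-- `M` is *existentially closed for* the theory `T` if `M ⊨ T` and `M` is existentially
closed in every model of `T` via every embedding. -/
def IsECFor (T : L.Theory) (M : Type (max u v)) [L.Structure M] [Nonempty M] : Prop :=
  M ⊨ T ∧ ∀ (N : Type (max u v)) [L.Structure N] [Nonempty N], N ⊨ T →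
    ∀ f : M ↪[L] N, IsECVia f

/-- `T_∀` : the set of universal sentences that are logical consequences of `T`. -/
def universalPart (T : L.Theory) : L.Theory :=
  {φ : L.Sentence | IsUniversalFormula φ ∧ T ⊨ᵇ φ}

/-- `Tstar` is a *model companion* of `T`: `Tstar` is model complete, every model of `T`
embeds into a model of `Tstar`, and every model of `Tstar` embeds into a model of `T`. -/
def IsModelCompanion (T Tstar : L.Theory) : Prop :=
  IsModelComplete Tstar ∧
  (∀ (M : Type (max u v)) [L.Structure M] [Nonempty M], M ⊨ T →
     ∃ (N : Type (max u v)) (_ : L.Structure N) (_ : Nonempty N),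
       N ⊨ Tstar ∧ Nonempty (M ↪[L] N)) ∧
  (∀ (M : Type (max u v)) [L.Structure M] [Nonempty M], M ⊨ Tstar →
     ∃ (N : Type (max u v)) (_ : L.Structure N) (_ : Nonempty N),
       N ⊨ T ∧ Nonempty (M ↪[L] N))

/-! A structure embeds into a model of `T` iff it satisfies `T_∀`. Universal sentences descend
along embeddings; conversely, if `M ⊨ T_∀` then `T` together with the quantifier-free diagram of
`M` is consistent by compactness, since a finite inconsistent part would make `∀ x̄, ¬ ψ(x̄)` a
universal consequence of `T` for some quantifier-free `ψ` with `M ⊨ ψ(ā)`. So `T` and `S` have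
the same structures embedding into their models, which is all the definition of model companion
sees of them. -/

namespace FirstOrder.Language

open BoundedFormula Structure

namespace BoundedFormula

variable {α β : Type*} {n : ℕ}

theorem IsQF.restrictFreeVar [DecidableEq α] {φ : L.BoundedFormula α n} (h : φ.IsQF)
    (f : φ.freeVarFinset → β) : (φ.restrictFreeVar f).IsQF := by
  induction h with
  | falsum => exact isQF_bot
  | of_isAtomic ha =>
    cases ha with
    | equal => exact (IsAtomic.equal _ _).isQF
    | rel => exact (IsAtomic.rel _ _).isQF
  | imp _ _ ih₁ ih₂ => exact (ih₁ _).imp (ih₂ _)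

theorem isQF_iInf [Finite β] {f : β → L.BoundedFormula α n} (h : ∀ b, (f b).IsQF) :
    (iInf f).IsQF := by
  let _ := Fintype.ofFinite β
  suffices ∀ l : List β, ((l.map f).foldr (· ⊓ ·) ⊤).IsQF from this _
  intro l
  induction l with
  | nil => exact IsQF.top
  | cons b l ih => exact (h b).inf ih

end BoundedFormula

namespace Formula

variable {α : Type*} [DecidableEq α]

/-- The universal closure of `φ`, quantifying over its (finitely many) free variables only. -/
noncomputable def allClosure (φ : L.Formula α) : L.Sentence :=
  iAlls φ.freeVarFinset (Formula.relabel Sum.inr (φ.restrictFreeVar id))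

theorem realize_allClosure {M : Type*} [L.Structure M] [Nonempty M] (φ : L.Formula α) :
    M ⊨ φ.allClosure ↔ ∀ v : α → M, φ.Realize v := by
  simp only [Sentence.Realize, allClosure, Formula.realize_iAlls, Formula.realize_relabel,
    Function.comp_def, Sum.elim_inr]
  constructor
  · intro h v
    exact (realize_restrictFreeVar (f := id) v fun _ => rfl).1 (h (v ∘ (↑)))
  · intro h w
    let v : α → M := fun a => if ha : a ∈ φ.freeVarFinset then w ⟨a, ha⟩ else Classical.arbitrary M
    exact (realize_restrictFreeVar (f := id) v fun a => (dif_pos a.2 : v a = w a).symm).2 (h v)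

end Formula

theorem BoundedFormula.IsQF.isUniversalFormula_allClosure {α : Type*} [DecidableEq α]
    {φ : L.Formula α} (h : φ.IsQF) : IsUniversalFormula φ.allClosure :=
  ⟨_, _, ((h.restrictFreeVar id).relabel _).relabel _, rfl⟩

def Embedding.ofRealizeQF {M N : Type*} [L.Structure M] [L.Structure N] (f : M → N)
    (hf : ∀ ψ : L.Formula M, ψ.IsQF → ψ.Realize id → ψ.Realize f) : M ↪[L] N where
  toFun := f
  inj' a b hab := by_contra fun hne =>
    hf (Term.equal (var a) (var b)).not (IsAtomic.equal _ _).isQF.not (by simpa) (by simpa)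
  map_fun' {n} F y := by
    simpa [Function.comp_def, eq_comm] using
      hf (Term.equal (func F (var ∘ y)) (var (funMap F y))) (IsAtomic.equal _ _).isQF (by simp)
  map_rel' {n} R y := by
    by_cases hR : RelMap R y
    · simpa [hR, Function.comp_def] using
        hf (R.formula (var ∘ y)) (IsAtomic.rel _ _).isQF (by simpa)
    · simpa [hR, Function.comp_def] using
        hf (R.formula (var ∘ y)).not (IsAtomic.rel _ _).isQF.not (by simpa)

variable (L) in
def qfDiagram (M : Type*) [L.Structure M] : L[[M]].Theory :=
  Formula.equivSentence '' {ψ : L.Formula M | ψ.IsQF ∧ ψ.Realize id}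

def Embedding.ofModelsQFDiagram {M : Type*} [L.Structure M] (N : Type*) [L.Structure N]
    [L[[M]].Structure N] [(L.lhomWithConstants M).IsExpansionOn N] [N ⊨ L.qfDiagram M] :
    M ↪[L] N :=
  ofRealizeQF (fun a => (L.con a : N)) fun ψ hψ hM => (Formula.realize_equivSentence N ψ).1
    (Theory.realize_sentence_of_mem (L.qfDiagram M) ⟨ψ, ⟨hψ, hM⟩, rfl⟩)

universe w

variable {T : L.Theory} {M : Type w} [L.Structure M]

theorem models_universalPart_of_embedding {N : Type*} [L.Structure N] [Nonempty N] [N ⊨ T]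
    (f : M ↪[L] N) : M ⊨ universalPart T := by
  refine (Theory.model_iff _).2 ?_
  rintro _ ⟨⟨n, χ, hχ, rfl⟩, hTφ⟩
  have hN : ∀ xs : Fin n → N, χ.Realize default xs :=
    realize_alls.1 (hTφ.realize_sentence N)
  refine realize_alls.2 fun xs => ?_
  rw [← hχ.realize_embedding f, Subsingleton.elim (f ∘ default) default]
  exact hN _

theorem realize_of_models_universalPart [Nonempty M] (hM : M ⊨ universalPart T) {α : Type*}
    {φ : L.Formula α} (hφ : φ.IsQF) (hT : T ⊨ᵇ φ) (v : α → M) : φ.Realize v := by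
  classical
  have hσ : φ.allClosure ∈ universalPart T :=
    ⟨hφ.isUniversalFormula_allClosure, Theory.models_sentence_iff.2 fun N =>
      (Formula.realize_allClosure φ).2 fun _ => hT.realize_formula N⟩
  exact (Formula.realize_allClosure φ).1 (hM.realize_of_mem _ hσ) v

theorem isSatisfiable_onTheory_union_qfDiagram [Nonempty M] (hM : M ⊨ universalPart T) :
    ((L.lhomWithConstants M).onTheory T ∪ L.qfDiagram M).IsSatisfiable := by
  refine Theory.isSatisfiable_iff_isFinitelySatisfiable.2 fun T0 hT0 => ?_
  let Q : Set (L.Formula M) :=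
    Formula.equivSentence ⁻¹' (T0 : Set _) ∩ {ψ | ψ.IsQF ∧ ψ.Realize id}
  have : Finite Q := (T0.finite_toSet.preimage
    Formula.equivSentence.injective.injOn).subset Set.inter_subset_left
  let Ψ : L.Formula M := Formula.iInf fun ψ : Q => ψ.1
  have hΨ : Ψ.IsQF := isQF_iInf fun ψ => ψ.2.2.1
  -- otherwise `T ⊨ ¬ Ψ`, which `M ⊨ T_∀` refutes at the parameters themselves
  obtain ⟨N, v, hv⟩ : ∃ (N : Theory.ModelType.{u, v, max u v w} T) (v : M → N), Ψ.Realize v := by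
    by_contra! h
    exact realize_of_models_universalPart hM hΨ.not
      (Theory.models_formula_iff.2 fun N v => Formula.realize_not.2 (h N v)) id
      (Formula.realize_iInf.2 fun ψ => ψ.2.2.2)
  let : (constantsOn M).Structure N := constantsOn.structure v
  have : N ⊨ (T0 : L[[M]].Theory) := by
    refine (Theory.model_iff _).2 fun φ hφ => ?_
    rcases hT0 hφ with hT | ⟨ψ, hψ, rfl⟩
    · exact ((LHom.onTheory_model _ _).2 N.is_model).realize_of_mem _ hT
    · exact (Formula.realize_equivSentence N ψ).2 (Formula.realize_iInf.1 hv ⟨ψ, hφ, hψ⟩)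
  exact Theory.Model.isSatisfiable N

theorem exists_embedding_model_iff_models_universalPart (T : L.Theory) (M : Type (max u v))
    [L.Structure M] [Nonempty M] :
    (∃ (N : Type (max u v)) (_ : L.Structure N) (_ : Nonempty N), N ⊨ T ∧ Nonempty (M ↪[L] N)) ↔
      M ⊨ universalPart T := by
  refine ⟨fun ⟨N, _, _, hN, ⟨f⟩⟩ => models_universalPart_of_embedding f, fun hM => ?_⟩
  obtain ⟨P⟩ := isSatisfiable_onTheory_union_qfDiagram hM
  let : L.Structure P := (L.lhomWithConstants M).reduct P
  have : (L.lhomWithConstants M).IsExpansionOn P := LHom.isExpansionOn_reduct _ _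
  have : P ⊨ L.qfDiagram M := P.is_model.mono Set.subset_union_right
  exact ⟨P, _, inferInstance, (LHom.onTheory_model _ _).1 (P.is_model.mono Set.subset_union_left),
    ⟨Embedding.ofModelsQFDiagram P⟩⟩

end FirstOrder.Language

/-- The model companion only depends on the universal part of a theory: a model companion
of `T` is also a model companion of any theory with the same universal consequences. -/
theorem isModelCompanion_of_universalPart_eq (T Tstar S : L.Theory)
    (h : IsModelCompanion T Tstar) (hS : universalPart S = universalPart T) :
    IsModelCompanion S Tstar := by
  obtain ⟨hmc, hTup, hTdown⟩ := h
  refine ⟨hmc, fun M _ _ hMS => ?_, fun M _ _ hM => ?_⟩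
  · have hMT : M ⊨ universalPart T := hS ▸ models_universalPart_of_embedding (Embedding.refl L M)
    obtain ⟨N, _, _, hNT, ⟨f⟩⟩ := (exists_embedding_model_iff_models_universalPart T M).2 hMT
    obtain ⟨N', _, hN', hN'T, ⟨g⟩⟩ := hTup N hNT
    exact ⟨N', _, hN', hN'T, ⟨g.comp f⟩⟩
  · rw [exists_embedding_model_iff_models_universalPart, hS,
      ← exists_embedding_model_iff_models_universalPart]
    exact hTdown M hM
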